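/- Let (T,t,σ) be a gene tree over the species set B and let S be a species tree on B that displays every triple in 𝔖(T,t,σ). Let G := {x ∈ V : t(x) ∈ {•, ⊙}} and define μ on G by μ(x) = σ(x) if t(x) = ⊙ and μ(x) = lca_S(σ(L(x))) if t(x) = •. Then for all x, y ∈ G with x ≺_T y, one has μ(x) ≺_S μ(y). -/

import Mathlib

/-- Event labels for the vertices of a gene tree: speciation `•`,
duplication `□`, and extant gene (leaf) `⊙`. -/
inductive Event : Type
  | spec : Event
  | dup : Event
  | leaf : Event
deriving DecidableEq

/-- A rooted tree structure on a partially ordered set: there is a greatest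
element (the root) and the set of ancestors of every element is a chain.
(Finiteness is imposed via a `Fintype` instance.) -/
def IsRootedTree (V : Type*) [PartialOrder V] : Prop :=
  (∃ ρ : V, IsTop ρ) ∧ ∀ x : V, IsChain (· ≤ ·) {y : V | x ≤ y}

/-- `L(x)`: the set of leaves (minimal elements) lying below `x`. -/
def leavesBelow {V : Type*} [PartialOrder V] (x : V) : Set V :=
  {y : V | IsMin y ∧ y ≤ x}

/-- A phylogenetic tree: a rooted tree in which every non-leaf vertex covers
at least two vertices. -/
def IsPhyloTree (V : Type*) [PartialOrder V] : Prop :=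
  IsRootedTree V ∧ ∀ x : V, ¬ IsMin x → ∃ c c' : V, c ≠ c' ∧ c ⋖ x ∧ c' ⋖ x

/-- A species tree: a rooted tree whose root covers exactly one vertex and in
which every non-leaf vertex other than the root covers at least two vertices. -/
def IsSpeciesTree (W : Type*) [PartialOrder W] : Prop :=
  IsRootedTree W ∧
  (∀ ρ : W, IsTop ρ → ∃! v : W, v ⋖ ρ) ∧
  (∀ x : W, ¬ IsMin x → ¬ IsTop x → ∃ c c' : W, c ≠ c' ∧ c ⋖ x ∧ c' ⋖ x)

/-- A rooted tree (on its vertex type) displays the triple `((a,b),c)`, i.e.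
`lca(a,b) ≺ lca({a,b,c})`. -/
def Displays {W : Type*} [PartialOrder W] (a b c : W) : Prop :=
  ∃ w₁ w₂ : W, IsLUB ({a, b} : Set W) w₁ ∧ IsLUB ({a, b, c} : Set W) w₂ ∧ w₁ < w₂

/-- Condition (C): the sets of species below distinct children of a
speciation vertex are disjoint. -/
def CondC {V B : Type*} [PartialOrder V] (t : V → Event) (σ : V → B) : Prop :=
  ∀ z c c' : V, t z = Event.spec → c ⋖ z → c' ⋖ z → c ≠ c' →
    σ '' leavesBelow c ∩ σ '' leavesBelow c' = ∅

/-- `(T,t,σ)` is a gene tree over the (abstract) species set `B`: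
`T` is a phylogenetic tree with at least three leaves, `t` labels exactly the
leaves with `⊙`, `σ` maps the leaves onto `B`, and condition (C) holds. -/
def IsGeneTree {V B : Type*} [PartialOrder V] (t : V → Event) (σ : V → B) : Prop :=
  IsPhyloTree V ∧ 3 ≤ {x : V | IsMin x}.ncard ∧
  (∀ x : V, t x = Event.leaf ↔ IsMin x) ∧
  (∀ b : B, ∃ x : V, IsMin x ∧ σ x = b) ∧
  CondC t σ

/-- `(T,t,σ)` is a gene tree whose species set `B` is the leaf set of the
species tree with vertex set `W`: `σ` maps the leaves of `T` onto the leaves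
of `W`. -/
def IsGeneTreeOver {V W : Type*} [PartialOrder V] [PartialOrder W]
    (t : V → Event) (σ : V → W) : Prop :=
  IsPhyloTree V ∧ 3 ≤ {x : V | IsMin x}.ncard ∧
  (∀ x : V, t x = Event.leaf ↔ IsMin x) ∧
  (∀ x : V, IsMin x → IsMin (σ x)) ∧
  (∀ b : W, IsMin b → ∃ x : V, IsMin x ∧ σ x = b) ∧
  CondC t σ

/-- The edges `[u,v]` of a species tree: pairs whose first component `u`
covers the second component `v` (so `.1` is the upper and `.2` the lower
endpoint of the edge). -/
abbrev SEdge (W : Type*) [PartialOrder W] : Type _ := {p : W × W // p.2 ⋖ p.1}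

/-- The (non-strict) extension `≼` of the species-tree order to `W ∪ H`. -/
def extLE {W : Type*} [PartialOrder W] : W ⊕ SEdge W → W ⊕ SEdge W → Prop
  | Sum.inl x, Sum.inl y => x ≤ y
  | Sum.inl x, Sum.inr e => x ≤ e.1.2
  | Sum.inr e, Sum.inl y => e.1.1 ≤ y
  | Sum.inr e, Sum.inr f => e.1.2 ≤ f.1.2

/-- The strict extension `≺` of the species-tree order to `W ∪ H`. -/
def extLT {W : Type*} [PartialOrder W] : W ⊕ SEdge W → W ⊕ SEdge W → Prop
  | Sum.inl x, Sum.inl y => x < y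
  | Sum.inl x, Sum.inr e => x ≤ e.1.2
  | Sum.inr e, Sum.inl y => e.1.1 ≤ y
  | Sum.inr e, Sum.inr f => e.1.2 < f.1.2

/-- `μ` is a reconciliation map from the gene tree `(T,t,σ)` to the species
tree on `W` (with edge set `SEdge W`); the leaves of `W` play the role of the
species set `B`. -/
def IsReconMap {V W : Type*} [PartialOrder V] [PartialOrder W]
    (t : V → Event) (σ : V → W) (μ : V → W ⊕ SEdge W) : Prop :=
  (∀ x : V, t x = Event.leaf → μ x = Sum.inl (σ x)) ∧
  (∀ x : V, t x = Event.spec → ∃ w : W, ¬ IsMin w ∧ μ x = Sum.inl w) ∧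
  (∀ x : V, t x = Event.dup → ∃ e : SEdge W, μ x = Sum.inr e) ∧
  (∀ x y : V, x < y → t x = Event.dup → t y = Event.dup → extLE (μ x) (μ y)) ∧
  (∀ x y : V, x < y → ¬ (t x = Event.dup ∧ t y = Event.dup) →
    extLT (μ x) (μ y)) ∧
  (∀ x : V, t x = Event.spec →
    ∃ w : W, IsLUB (σ '' leavesBelow x) w ∧ μ x = Sum.inl w)

/-- Membership of the triple `((x,y),z)` in `𝔊(T,t,σ)`: a triple of leaves
displayed by `T`, rooted in a speciation vertex, whose species are pairwise
distinct. -/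
def TripleInG {V B : Type*} [PartialOrder V] (t : V → Event) (σ : V → B)
    (x y z : V) : Prop :=
  IsMin x ∧ IsMin y ∧ IsMin z ∧
  (∃ w₁ w₂ : V, IsLUB ({x, y} : Set V) w₁ ∧ IsLUB ({x, y, z} : Set V) w₂ ∧
    w₁ < w₂ ∧ t w₂ = Event.spec) ∧
  σ x ≠ σ y ∧ σ y ≠ σ z ∧ σ x ≠ σ z


section Helpers

variable {V : Type*} [PartialOrder V] [Fintype V]

private lemma exists_min_le' (x : V) : ∃ l : V, IsMin l ∧ l ≤ x := by
  obtain ⟨l, hl, hmin⟩ := Set.Finite.exists_minimalFor id {y : V | y ≤ x}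
    (Set.toFinite _) ⟨x, le_refl x⟩
  exact ⟨l, fun b hb => hmin (hb.trans hl) hb, hl⟩

private lemma exists_le_cov' {x y : V} (h : x < y) : ∃ c, x ≤ c ∧ c ⋖ y := by
  obtain ⟨c, hc, hmax⟩ := Set.Finite.exists_maximalFor id {v : V | x ≤ v ∧ v < y}
    (Set.toFinite _) ⟨x, le_refl x, h⟩
  refine ⟨c, hc.1, hc.2, fun v hcv hvy => ?_⟩
  exact absurd (hmax ⟨hc.1.trans hcv.le, hvy⟩ hcv.le) (not_le_of_gt hcv)

private lemma exists_isLUB' (hRT : IsRootedTree V) {S : Set V} (hne : S.Nonempty) :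
    ∃ m : V, IsLUB S m := by
  obtain ⟨ρ, hρ⟩ := hRT.1
  obtain ⟨a, ha⟩ := hne
  obtain ⟨m, hm, hmin⟩ := Set.Finite.exists_minimalFor id (upperBounds S)
    (Set.toFinite _) ⟨ρ, fun b _ => hρ b⟩
  refine ⟨m, hm, fun v hv => ?_⟩
  have ham : a ≤ m := hm ha
  have hav : a ≤ v := hv ha
  rcases eq_or_ne m v with rfl | hne'
  · exact le_refl _
  · rcases hRT.2 a ham hav hne' with h | h
    · exact h
    · exact hmin hv h

private lemma children_incomp {c c' z y : V}
    (hRT : IsRootedTree V) (hc : c ⋖ y) (hc' : c' ⋖ y) (hne : c ≠ c')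
    (h1 : z ≤ c) (h2 : z ≤ c') : False := by
  rcases hRT.2 z h1 h2 hne with h | h
  · exact hc.2 (lt_of_le_of_ne h hne) hc'.1
  · exact hc'.2 (lt_of_le_of_ne h hne.symm) hc.1

private lemma isLUB_triple' (hRT : IsRootedTree V)
    {a b z c c' y : V} (hac : a ≤ c) (hbc : b ≤ c) (hzc' : z ≤ c')
    (hc : c ⋖ y) (hc' : c' ⋖ y) (hne : c ≠ c') :
    IsLUB ({a, b, z} : Set V) y := by
  constructor
  · rintro v (rfl | rfl | rfl)
    · exact hac.trans hc.1.le
    · exact hbc.trans hc.1.le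
    · exact hzc'.trans hc'.1.le
  · intro u hu
    have hau : a ≤ u := hu (by simp)
    have hzu : z ≤ u := hu (by simp)
    rcases eq_or_ne u c with rfl | hne1
    · exact absurd (children_incomp hRT hc hc' hne hzu hzc') id
    rcases hRT.2 a hau hac hne1 with h | h
    · exact absurd (children_incomp hRT hc hc' hne (hzu.trans h) hzc') id
    · have hcu : c < u := lt_of_le_of_ne h hne1.symm
      rcases eq_or_ne u y with rfl | hne2
      · exact le_refl _
      rcases hRT.2 a hau (hac.trans hc.1.le) hne2 with h2 | h2
      · exact absurd (hc.2 hcu (lt_of_le_of_ne h2 hne2)) id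
      · exact h2

end Helpers

/-- the Claim in the proof of Theorem 1.  Suppose the
species tree `S` on `B` displays every triple in `𝔖(T,t,σ)`, and let `μ` be
defined on `G = {x ∈ V : t(x) ∈ {•,⊙}}` by `μ x = σ x` for leaves and
`μ x = lca_S(σ(L(x)))` for speciation vertices.  Then `μ` is strictly
order-preserving on `G`: `x ≺_T y` implies `μ x ≺_S μ y`. -/
theorem claim_strict_order_on_G
    {V W : Type*} [PartialOrder V] [Fintype V] [PartialOrder W] [Fintype W]
    (t : V → Event) (σ : V → W) (μ : V → W)
    (hT : IsGeneTreeOver t σ) (hS : IsSpeciesTree W)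
    (hdisp : ∀ x y z : V, TripleInG t σ x y z → Displays (σ x) (σ y) (σ z))
    (hμleaf : ∀ x : V, t x = Event.leaf → μ x = σ x)
    (hμspec : ∀ x : V, t x = Event.spec → IsLUB (σ '' leavesBelow x) (μ x)) :
    ∀ x y : V, t x ≠ Event.dup → t y ≠ Event.dup → x < y → μ x < μ y := by
  obtain ⟨⟨hVRT, hbranch⟩, -, hleaf_iff, hσmin, -, hC⟩ := hT
  obtain ⟨hWRT, -, -⟩ := hS
  intro x y hx hy hxy
  -- y is a speciation vertex
  have hy_nmin : ¬ IsMin y := fun h => absurd hxy (h hxy.le).not_gt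
  have hty : t y = Event.spec := by
    cases h : t y with
    | spec => rfl
    | dup => exact absurd h hy
    | leaf => exact absurd ((hleaf_iff y).1 h) hy_nmin
  have hμy : IsLUB (σ '' leavesBelow y) (μ y) := hμspec y hty
  -- children c (above x) and c' of y
  obtain ⟨c, hxc, hcy⟩ := exists_le_cov' hxy
  obtain ⟨d, d', hdd', hdy, hd'y⟩ := hbranch y hy_nmin
  obtain ⟨c', hc'y, hcc'⟩ : ∃ c', c' ⋖ y ∧ c ≠ c' := by
    rcases eq_or_ne c d with rfl | h
    · exact ⟨d', hd'y, hdd'⟩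
    · exact ⟨d, hdy, h⟩
  -- a leaf z below c'
  obtain ⟨z, hzmin, hzc'⟩ := exists_min_le' c'
  have hzy : z ∈ leavesBelow y := ⟨hzmin, hzc'.trans hc'y.1.le⟩
  -- species disjointness at y
  have hdisjy : σ '' leavesBelow c ∩ σ '' leavesBelow c' = ∅ :=
    hC y c c' hty hcy hc'y hcc'
  have hσz_not : ∀ v : V, v ∈ leavesBelow c → σ v ≠ σ z := by
    intro v hv hvz
    have : σ v ∈ σ '' leavesBelow c ∩ σ '' leavesBelow c' :=
      ⟨⟨v, hv, rfl⟩, ⟨z, ⟨hzmin, hzc'⟩, hvz.symm⟩⟩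
    rw [hdisjy] at this
    exact this
  cases htx : t x with
  | dup => exact absurd htx hx
  | leaf =>
    -- leaf case
    have hxmin : IsMin x := (hleaf_iff x).1 htx
    have hμxσ : μ x = σ x := hμleaf x htx
    have hxle : σ x ≤ μ y := hμy.1 ⟨x, ⟨hxmin, hxy.le⟩, rfl⟩
    rw [hμxσ]
    refine lt_of_le_of_ne hxle (fun heq => ?_)
    obtain ⟨a, hamin, had⟩ := exists_min_le' d
    obtain ⟨b, hbmin, hbd'⟩ := exists_min_le' d'
    have hab : σ a ≠ σ b := by
      intro h
      have : σ a ∈ σ '' leavesBelow d ∩ σ '' leavesBelow d' :=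
        ⟨⟨a, ⟨hamin, had⟩, rfl⟩, ⟨b, ⟨hbmin, hbd'⟩, h.symm⟩⟩
      rw [hC y d d' hty hdy hd'y hdd'] at this
      exact this
    have hmin_sx : IsMin (σ x) := hσmin x hxmin
    have ha1 : σ a ≤ σ x := heq ▸ hμy.1 ⟨a, ⟨hamin, had.trans hdy.1.le⟩, rfl⟩
    have hb1 : σ b ≤ σ x := heq ▸ hμy.1 ⟨b, ⟨hbmin, hbd'.trans hd'y.1.le⟩, rfl⟩
    exact hab ((le_antisymm ha1 (hmin_sx ha1)).trans (le_antisymm hb1 (hmin_sx hb1)).symm)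
  | spec =>
    -- speciation case
    have hμx : IsLUB (σ '' leavesBelow x) (μ x) := hμspec x htx
    have hsub : σ '' leavesBelow x ⊆ σ '' leavesBelow y := by
      rintro w ⟨v, ⟨hvmin, hvx⟩, rfl⟩
      exact ⟨v, ⟨hvmin, hvx.trans hxy.le⟩, rfl⟩
    have hle : μ x ≤ μ y := hμx.2 (fun w hw => hμy.1 (hsub hw))
    refine lt_of_le_of_ne hle (fun heqμ => ?_)
    -- two leaves below distinct children of x with distinct species
    have hx_nmin : ¬ IsMin x := fun h => by
      rw [(hleaf_iff x).2 h] at htx; exact Event.noConfusion htx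
    obtain ⟨e, e', hee', hex, he'x⟩ := hbranch x hx_nmin
    obtain ⟨a0, ha0min, ha0e⟩ := exists_min_le' e
    obtain ⟨b0, hb0min, hb0e'⟩ := exists_min_le' e'
    have ha0x : a0 ∈ leavesBelow x := ⟨ha0min, ha0e.trans hex.1.le⟩
    have hb0x : b0 ∈ leavesBelow x := ⟨hb0min, hb0e'.trans he'x.1.le⟩
    have hab0 : σ a0 ≠ σ b0 := by
      intro h
      have : σ a0 ∈ σ '' leavesBelow e ∩ σ '' leavesBelow e' :=
        ⟨⟨a0, ⟨ha0min, ha0e⟩, rfl⟩, ⟨b0, ⟨hb0min, hb0e'⟩, h.symm⟩⟩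
      rw [hC x e e' htx hex he'x hee'] at this
      exact this
    -- find b* in leavesBelow x with IsLUB {σ a0, σ b*} (μ x)
    set U : Set W := {u : W | ∃ b' : V, b' ∈ leavesBelow x ∧ IsLUB {σ a0, σ b'} u} with hU
    have hUne : U.Nonempty := by
      obtain ⟨u, hu⟩ := exists_isLUB' hWRT (S := ({σ a0, σ b0} : Set W))
        ⟨σ a0, by simp⟩
      exact ⟨u, b0, hb0x, hu⟩
    obtain ⟨m, ⟨bs, hbsx, hlubbs⟩, hmax⟩ :=
      Set.Finite.exists_maximalFor id U (Set.toFinite _) hUne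
    have ha0m : σ a0 ≤ m := hlubbs.1 (by simp)
    have hub : m ∈ upperBounds (σ '' leavesBelow x) := by
      rintro w ⟨b', hb'x, rfl⟩
      obtain ⟨u, hu⟩ := exists_isLUB' hWRT (S := ({σ a0, σ b'} : Set W))
        ⟨σ a0, by simp⟩
      have huU : u ∈ U := ⟨b', hb'x, hu⟩
      have hb'u : σ b' ≤ u := hu.1 (by simp)
      have ha0u : σ a0 ≤ u := hu.1 (by simp)
      rcases eq_or_ne u m with rfl | hne'
      · exact hb'u
      · rcases hWRT.2 (σ a0) ha0u ha0m hne' with h | h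
        · exact hb'u.trans h
        · exact hb'u.trans (hmax huU h)
    have hm_eq : m = μ x := le_antisymm
      (hlubbs.2 (by
        rintro w (rfl | rfl)
        · exact hμx.1 ⟨a0, ha0x, rfl⟩
        · exact hμx.1 ⟨bs, hbsx, rfl⟩))
      (hμx.2 hub)
    have hlubpair : IsLUB ({σ a0, σ bs} : Set W) (μ x) := hm_eq ▸ hlubbs
    -- σ a0 ≠ σ bs
    have habs : σ a0 ≠ σ bs := by
      intro h
      have hsingle : IsLUB ({σ a0} : Set W) (μ x) := by
        rw [← h] at hlubpair
        simpa [Set.pair_eq_singleton] using hlubpair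
      have hμxa0 : μ x = σ a0 := (isLUB_singleton.unique hsingle).symm
      have hb0le : σ b0 ≤ σ a0 := hμxa0 ▸ hμx.1 ⟨b0, hb0x, rfl⟩
      exact hab0 (le_antisymm (hσmin a0 ha0min hb0le) hb0le)
    -- build the triple in 𝔊
    have ha0c : a0 ≤ c := ha0x.2.trans hxc
    have hbsc : bs ≤ c := hbsx.2.trans hxc
    obtain ⟨w₁, hw₁⟩ := exists_isLUB' hVRT (S := ({a0, bs} : Set V)) ⟨a0, by simp⟩
    have hw₁x : w₁ ≤ x := hw₁.2 (by rintro v (rfl | rfl); exacts [ha0x.2, hbsx.2])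
    have htrip : TripleInG t σ a0 bs z := by
      refine ⟨ha0min, hbsx.1, hzmin, ⟨w₁, y, hw₁,
        isLUB_triple' hVRT ha0c hbsc hzc' hcy hc'y hcc',
        lt_of_le_of_lt hw₁x hxy, hty⟩, habs, ?_, ?_⟩
      · exact fun h => hσz_not bs ⟨hbsx.1, hbsc⟩ h
      · exact fun h => hσz_not a0 ⟨ha0min, ha0c⟩ h
    obtain ⟨w₁', w₂', h1', h2', hlt'⟩ := hdisp a0 bs z htrip
    have hw₁'eq : w₁' = μ x := h1'.unique hlubpair
    have hzle : σ z ≤ μ x := heqμ ▸ hμy.1 ⟨z, hzy, rfl⟩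
    have hw₂'le : w₂' ≤ μ x := h2'.2 (by
      rintro w (rfl | rfl | rfl)
      · exact hμx.1 ⟨a0, ha0x, rfl⟩
      · exact hμx.1 ⟨bs, hbsx, rfl⟩
      · exact hzle)
    rw [hw₁'eq] at hlt'
    exact absurd (hlt'.trans_le hw₂'le) (lt_irrefl _)
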